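/- Monotonicity property of the modified convolution. Let A, D : ℝ → ℝ be nonnegative nondecreasing functions vanishing for t ≤ 0 with D ≤ A, let g be a nonnegative nondecreasing function, let 0 ≤ t₀ ≤ t₁ ≤ t₂ ≤ t, and let a ≥ (t − t₀) − (t₂ − t₁). If D(t₁, t₂) ≥ (A *_{t₁} g)(t₂), then D(t₀, t) ≥ (A *_{t₀} g_a)(t), where g_a(x) = g(x − a). -/
import Mathlib


open MeasureTheory Set

/-- Min-plus convolution: `(f * g)(t) = inf_{τ ∈ [0,t]} { f(t−τ) + g(τ) }`.
(For `t < 0` the set is empty and `sInf ∅ = 0` in `ℝ`.) -/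
noncomputable def mpConv (f g : ℝ → ℝ) (t : ℝ) : ℝ :=
  sInf ((fun τ => f (t - τ) + g τ) '' Set.Icc 0 t)

/-- Min-plus deconvolution: `(f ⊘ g)(t) = sup_{τ ≥ 0} { f(t+τ) − g(τ) }`. -/
noncomputable def mpDeconv (f g : ℝ → ℝ) (t : ℝ) : ℝ :=
  sSup ((fun τ => f (t + τ) - g τ) '' Set.Ici 0)

/-- Modified min-plus convolution at time `t₀ ≤ t`:
`(A *_{t₀} g)(t) = min{ g(t−t₀), B(t₀) + inf_{τ ∈ [0,t−t₀]} { A(t₀,t−τ) + g(τ) } }`,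
where `B(t₀) = A(t₀) − D(t₀)` and `A(x,y) = A(y) − A(x)`. -/
noncomputable def mpConvFrom (A D g : ℝ → ℝ) (t₀ t : ℝ) : ℝ :=
  min (g (t - t₀))
    ((A t₀ - D t₀) +
      sInf ((fun τ => (A (t - τ) - A t₀) + g τ) '' Set.Icc 0 (t - t₀)))

/-- Iterated min-plus convolution `S 0 * S 1 * ⋯ * S n`. -/
noncomputable def convNet (S : ℕ → ℝ → ℝ) : ℕ → ℝ → ℝ
  | 0 => S 0
  | n + 1 => mpConv (convNet S n) (S (n + 1))

/-- An arrival/departure pair: nonnegative, nondecreasing, vanishing for `t ≤ 0`,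
with departures never exceeding arrivals. -/
def FlowPair (A D : ℝ → ℝ) : Prop :=
  (∀ t, 0 ≤ A t) ∧ (∀ t, 0 ≤ D t) ∧ Monotone A ∧ Monotone D ∧
  (∀ t, t ≤ 0 → A t = 0) ∧ (∀ t, t ≤ 0 → D t = 0) ∧ (∀ t, D t ≤ A t)

/-- Monotonicity property of the modified convolution: for nonnegative nondecreasing `g`,
`0 ≤ t₀ ≤ t₁ ≤ t₂ ≤ t` and `a ≥ (t − t₀) − (t₂ − t₁)`, the bound
`D(t₁,t₂) ≥ (A *_{t₁} g)(t₂)` implies `D(t₀,t) ≥ (A *_{t₀} g_a)(t)`, where `g_a(x) = g(x−a)`. -/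
theorem stmt19 (A D g : ℝ → ℝ) (t₀ t₁ t₂ t a : ℝ)
    (hflow : FlowPair A D)
    (hgnn : ∀ x, 0 ≤ g x) (hgmono : Monotone g)
    (h0 : 0 ≤ t₀) (h01 : t₀ ≤ t₁) (h12 : t₁ ≤ t₂) (h2t : t₂ ≤ t)
    (ha : (t - t₀) - (t₂ - t₁) ≤ a)
    (hD : mpConvFrom A D g t₁ t₂ ≤ D t₂ - D t₁) :
    mpConvFrom A D (fun x => g (x - a)) t₀ t ≤ D t - D t₀ := by
  obtain ⟨hAnn, hDnn, hAmono, hDmono, _, _, hDA⟩ := hflow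
  unfold mpConvFrom at hD ⊢
  rcases min_le_iff.mp hD with h | h
  · refine min_le_iff.mpr (Or.inl ?_)
    have h1 : g (t - t₀ - a) ≤ g (t₂ - t₁) := hgmono (by linarith)
    have h2 := hDmono h2t
    have h3 := hDmono h01
    linarith
  · refine min_le_iff.mpr (Or.inr ?_)
    have hbdd : BddBelow ((fun τ => A (t - τ) - A t₀ + g (τ - a)) '' Set.Icc 0 (t - t₀)) := by
      refine ⟨-A t₀, ?_⟩
      rintro x ⟨τ, hτ, rfl⟩
      have h1 := hAnn (t - τ); have h2 := hgnn (τ - a)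
      simp only []; linarith
    have hne : (Set.Icc (0:ℝ) (t₂ - t₁)).Nonempty := ⟨0, le_refl 0, by linarith⟩
    have key : sInf ((fun τ => A (t - τ) - A t₀ + g (τ - a)) '' Set.Icc 0 (t - t₀))
        ≤ sInf ((fun τ => A (t₂ - τ) - A t₁ + g τ) '' Set.Icc 0 (t₂ - t₁)) + (A t₁ - A t₀) := by
      rw [← sub_le_iff_le_add]
      apply le_csInf (hne.image _)
      rintro x ⟨τ, ⟨hτ0, hτ1⟩, rfl⟩
      rw [sub_le_iff_le_add]
      have hmem : t - t₂ + τ ∈ Set.Icc 0 (t - t₀) := ⟨by linarith, by linarith⟩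
      have hle : sInf ((fun τ => A (t - τ) - A t₀ + g (τ - a)) '' Set.Icc 0 (t - t₀))
          ≤ A (t - (t - t₂ + τ)) - A t₀ + g (t - t₂ + τ - a) :=
        csInf_le hbdd ⟨_, hmem, rfl⟩
      have heq : t - (t - t₂ + τ) = t₂ - τ := by ring
      rw [heq] at hle
      have hg : g (t - t₂ + τ - a) ≤ g τ := hgmono (by linarith)
      simp only []
      linarith
    have hconv : (fun τ => A (t - τ) - A t₀ + (fun x => g (x - a)) τ) =
        (fun τ => A (t - τ) - A t₀ + g (τ - a)) := rfl
    rw [hconv]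
    have h2 := hDmono h2t
    linarith
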